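/- (Lemma 1(c).) Let F be a finite field with s elements, u ≥ 3 an integer, and for 1 ≤ i ≤ u let ξ_i : F^u → F be the i-th coordinate projection. Let A be the family of s+1 functions {ξ_1 + μξ_2 : μ ∈ F} ∪ {ξ_2}, and for 1 ≤ v ≤ u−2 let R_v be the family of s² functions {ξ_1 + μξ_2 + νξ_{v+2} : μ ∈ F, ν ∈ F∖{0}} ∪ {ξ_2 + νξ_{v+2} : ν ∈ F∖{0}} ∪ {ξ_{v+2}}. Then for any two distinct functions g, g′ ∈ A and any choice of one function h_v ∈ R_v for each v = 1,…,u−2, the map F^u → F^u sending x to (g(x), g′(x), h_1(x), …, h_{u−2}(x)) is a bijection; equivalently, these u functions form an OA(s^u, u, s, u) (every u-tuple of values occurs exactly once). -/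

import Mathlib

open scoped Classical

noncomputable def solv {F : Type} [Field F] (p q tv : F) :
    Option (Option F × {y : F // y ≠ 0}) → F
  | none => tv
  | some (none, ν) => (tv - q) * ν.1⁻¹
  | some (some μ, ν) => (tv - p - μ * q) * ν.1⁻¹

/-- Lemma 1(c): for any two distinct members `g, g'` of
`A = {ξ₁ + μξ₂ : μ ∈ F} ∪ {ξ₂}` and one member `h_v ∈ R_v` for each `v = 1,…,u-2`,
the map `x ↦ (g x, g' x, h₁ x, …, h_{u-2} x)` attains every `u`-tuple exactly once
(an OA(s^u, u, s, u)). -/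
theorem statement13 (F : Type) [Field F] [Fintype F] [DecidableEq F]
    (s u : ℕ) (hcard : Fintype.card F = s) (hu : 3 ≤ u)
    (A : Option F → (Fin u → F) → F)
    (hA1 : ∀ μ : F, A (some μ) = fun x => x ⟨0, by omega⟩ + μ * x ⟨1, by omega⟩)
    (hA2 : A none = fun x => x ⟨1, by omega⟩)
    (R : ℕ → Option (Option F × {y : F // y ≠ 0}) → (Fin u → F) → F)
    (hR1 : ∀ (v : ℕ) (_ : 1 ≤ v) (_ : v ≤ u - 2) (μ : F) (ν : {y : F // y ≠ 0}),
      R v (some (some μ, ν)) =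
        fun x => x ⟨0, by omega⟩ + μ * x ⟨1, by omega⟩ + ν.1 * x ⟨v + 1, by omega⟩)
    (hR2 : ∀ (v : ℕ) (_ : 1 ≤ v) (_ : v ≤ u - 2) (ν : {y : F // y ≠ 0}),
      R v (some (none, ν)) = fun x => x ⟨1, by omega⟩ + ν.1 * x ⟨v + 1, by omega⟩)
    (hR3 : ∀ (v : ℕ) (_ : 1 ≤ v) (_ : v ≤ u - 2),
      R v none = fun x => x ⟨v + 1, by omega⟩) :
    ∀ o o' : Option F, o ≠ o' →
      ∀ c : ℕ → Option (Option F × {y : F // y ≠ 0}),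
      ∀ a b : F, ∀ t : ℕ → F,
        (Finset.univ.filter
          (fun x : Fin u → F => A o x = a ∧ A o' x = b ∧
            ∀ v ∈ Finset.Icc 1 (u - 2), R v (c v) x = t v)).card = 1 := by
  intro o o' hne c a b t
  -- determine the first two coordinates from the two A-equations
  obtain ⟨p, q, hpq⟩ : ∃ p q : F, ∀ x : Fin u → F,
      (A o x = a ∧ A o' x = b) ↔ (x ⟨0, by omega⟩ = p ∧ x ⟨1, by omega⟩ = q) := by
    match o, o' with
    | none, none => exact absurd rfl hne
    | some μ, none =>
        refine ⟨a - μ * b, b, fun x => ?_⟩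
        simp only [hA1, hA2]
        constructor
        · rintro ⟨h1, h2⟩
          exact ⟨by linear_combination h1 - μ * h2, h2⟩
        · rintro ⟨h1, h2⟩
          exact ⟨by rw [h1, h2]; ring, h2⟩
    | none, some μ =>
        refine ⟨b - μ * a, a, fun x => ?_⟩
        simp only [hA1, hA2]
        constructor
        · rintro ⟨h1, h2⟩
          exact ⟨by linear_combination h2 - μ * h1, h1⟩
        · rintro ⟨h1, h2⟩
          exact ⟨h2, by rw [h1, h2]; ring⟩
    | some μ, some μ' =>
        have hμ : μ ≠ μ' := fun h => hne (by rw [h])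
        have hd : μ - μ' ≠ 0 := sub_ne_zero.mpr hμ
        refine ⟨a - μ * ((a - b) / (μ - μ')), (a - b) / (μ - μ'), fun x => ?_⟩
        simp only [hA1]
        constructor
        · rintro ⟨h1, h2⟩
          have hq : x ⟨1, by omega⟩ = (a - b) / (μ - μ') := by
            field_simp
            linear_combination h1 - h2
          exact ⟨by linear_combination h1 - μ * hq, hq⟩
        · rintro ⟨h1, h2⟩
          rw [h1, h2]
          constructor
          · ring
          · field_simp
            ring
  -- the unique solution
  set x₀ : Fin u → F := fun i =>
    if (i : ℕ) = 0 then p else if (i : ℕ) = 1 then q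
    else solv p q (t ((i : ℕ) - 1)) (c ((i : ℕ) - 1)) with hx₀
  have hx0p : ∀ i : Fin u, (i : ℕ) = 0 → x₀ i = p := by
    intro i hi; simp [hx₀, hi]
  have hx0q : ∀ i : Fin u, (i : ℕ) = 1 → x₀ i = q := by
    intro i hi; simp [hx₀, hi]
  have hx0v : ∀ i : Fin u, 2 ≤ (i : ℕ) →
      x₀ i = solv p q (t ((i : ℕ) - 1)) (c ((i : ℕ) - 1)) := by
    intro i hi
    simp only [hx₀]
    rw [if_neg (by omega), if_neg (by omega)]
  rw [Finset.card_eq_one]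
  refine ⟨x₀, ?_⟩
  ext x
  simp only [Finset.mem_filter, Finset.mem_univ, true_and, Finset.mem_singleton]
  constructor
  · rintro ⟨ha, hb, hR⟩
    obtain ⟨h0, h1⟩ := (hpq x).mp ⟨ha, hb⟩
    funext i
    rcases Nat.lt_or_ge (i : ℕ) 2 with hi | hi
    · have : (i : ℕ) = 0 ∨ (i : ℕ) = 1 := by omega
      rcases this with h | h
      · rw [hx0p i h]
        have hi0 : i = (⟨0, by omega⟩ : Fin u) := Fin.ext (by simp [h])
        rw [hi0]
        exact h0
      · rw [hx0q i h]
        have hi1 : i = (⟨1, by omega⟩ : Fin u) := Fin.ext (by simp [h])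
        rw [hi1]
        exact h1
    · have hv1 : 1 ≤ (i : ℕ) - 1 := by omega
      have hv2 : (i : ℕ) - 1 ≤ u - 2 := by
        have := i.2; omega
      have hieq : (⟨(i : ℕ) - 1 + 1, by omega⟩ : Fin u) = i := Fin.ext (by simp; omega)
      have hRi := hR ((i : ℕ) - 1) (Finset.mem_Icc.mpr ⟨hv1, hv2⟩)
      rw [hx0v i hi]
      rcases hc : c ((i : ℕ) - 1) with _ | ⟨_ | μ, ν⟩
      · rw [hc] at hRi
        have hE : x ⟨(i : ℕ) - 1 + 1, by omega⟩ = t ((i : ℕ) - 1) := by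
          rw [hR3 _ hv1 hv2] at hRi; exact hRi
        rw [hieq] at hE
        simpa [solv] using hE
      · rw [hc] at hRi
        have hE : x ⟨1, by omega⟩ + ν.1 * x ⟨(i : ℕ) - 1 + 1, by omega⟩
            = t ((i : ℕ) - 1) := by
          rw [hR2 _ hv1 hv2] at hRi; exact hRi
        rw [hieq, h1] at hE
        have hν := ν.2
        simp only [solv]
        field_simp
        linear_combination hE
      · rw [hc] at hRi
        have hE : x ⟨0, by omega⟩ + μ * x ⟨1, by omega⟩
            + ν.1 * x ⟨(i : ℕ) - 1 + 1, by omega⟩ = t ((i : ℕ) - 1) := by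
          rw [hR1 _ hv1 hv2] at hRi; exact hRi
        rw [hieq, h0, h1] at hE
        have hν := ν.2
        simp only [solv]
        field_simp
        linear_combination hE
  · rintro rfl
    have hp : x₀ ⟨0, by omega⟩ = p := hx0p _ rfl
    have hq : x₀ ⟨1, by omega⟩ = q := hx0q _ rfl
    obtain ⟨ha, hb⟩ := (hpq x₀).mpr ⟨hp, hq⟩
    refine ⟨ha, hb, ?_⟩
    intro v hv
    obtain ⟨hv1, hv2⟩ := Finset.mem_Icc.mp hv
    have hval : x₀ ⟨v + 1, by omega⟩ = solv p q (t v) (c v) := by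
      rw [hx0v ⟨v + 1, by omega⟩ (by simpa using hv1)]
      simp
    rcases hc : c v with _ | ⟨_ | μ, ν⟩
    · rw [hR3 _ hv1 hv2]
      simpa [solv, hc] using hval
    · rw [hR2 _ hv1 hv2]
      have hν := ν.2
      show x₀ ⟨1, by omega⟩ + ν.1 * x₀ ⟨v + 1, by omega⟩ = t v
      rw [hq, hval, hc]
      simp only [solv]
      field_simp
      ring
    · rw [hR1 _ hv1 hv2]
      have hν := ν.2
      show x₀ ⟨0, by omega⟩ + μ * x₀ ⟨1, by omega⟩ + ν.1 * x₀ ⟨v + 1, by omega⟩ = t v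
      rw [hp, hq, hval, hc]
      simp only [solv]
      field_simp
      ring
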